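/- arXiv:1312.3902 — 2 statements merged into one kernel-verified Lean document; each statement's English description precedes it below -/
import Mathlib

section
/- The function Ψ(τ) = τ⁴/(sinh²(τ) − τ²) is monotone decreasing on (0, +∞), and its limit as τ → 0⁺ equals 3; in particular Ψ(τ) ≤ 3 for all τ > 0. -/
/-!
With `u = 2τ` one has `sinh² τ - τ² = (cosh u - 1 - u²/2) / 2`, so `Ψ(τ) = 1 / (8 φ(2τ))` where
`φ(u) = (cosh u - 1 - u²/2) / u⁴ = ∑ u^(2n) / (2n+4)!`. Having nonnegative coefficients in `u²`,
`φ` is increasing on `[0, ∞)`, and comparing with the first term and with the series of `cosh u`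
termwise gives `1/24 ≤ φ(u) ≤ cosh u / 24`. Hence `Ψ` is decreasing, `Ψ ≤ 3`, and `Ψ → 3` at `0⁺`.
-/

open Real Filter Set

/-- Ψ(τ) = τ⁴/(sinh²τ − τ²). -/
noncomputable def Psi (τ : ℝ) : ℝ := τ ^ 4 / ((Real.sinh τ) ^ 2 - τ ^ 2)

open Nat Topology

noncomputable def coshTail (u : ℝ) : ℝ := ∑' n : ℕ, u ^ (2 * n) / (2 * n + 4)!

lemma coshTail_term_nonneg (u : ℝ) (n : ℕ) : 0 ≤ u ^ (2 * n) / (2 * n + 4)! := by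
  rw [pow_mul]; positivity

lemma coshTail_term_le (u : ℝ) (n : ℕ) :
    u ^ (2 * n) / (2 * n + 4)! ≤ u ^ (2 * n) / (2 * n)! / 24 := by
  have hfact : ((2 * n)! : ℝ) * 24 ≤ (2 * n + 4)! := by
    exact_mod_cast Nat.le_of_dvd (factorial_pos _)
      (Nat.factorial_mul_factorial_dvd_factorial_add (2 * n) 4)
  rw [div_div]
  exact div_le_div_of_nonneg_left (by rw [pow_mul]; positivity) (by positivity) hfact

lemma summable_coshTail (u : ℝ) : Summable fun n : ℕ => u ^ (2 * n) / (2 * n + 4)! :=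
  ((Real.hasSum_cosh u).div_const 24).summable.of_nonneg_of_le (coshTail_term_nonneg u)
    (coshTail_term_le u)

lemma coshTail_eq {u : ℝ} (hu : u ≠ 0) : coshTail u = (cosh u - 1 - u ^ 2 / 2) / u ^ 4 := by
  have h := ((hasSum_nat_add_iff' 2).2 (Real.hasSum_cosh u)).div_const (u ^ 4)
  have hterm : (fun n : ℕ => u ^ (2 * (n + 2)) / (2 * (n + 2))! / u ^ 4) =
      fun n : ℕ => u ^ (2 * n) / (2 * n + 4)! := by
    funext n
    rw [show 2 * (n + 2) = 2 * n + 4 by ring, pow_add]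
    field_simp
  rw [hterm] at h
  refine h.tsum_eq.trans ?_
  simp [Finset.sum_range_succ]
  ring

lemma one_div_24_le_coshTail (u : ℝ) : 1 / 24 ≤ coshTail u := by
  have h : _ ≤ coshTail u := (summable_coshTail u).le_tsum 0 fun n _ => coshTail_term_nonneg u n
  simpa [factorial] using h

lemma coshTail_le (u : ℝ) : coshTail u ≤ cosh u / 24 :=
  hasSum_le (coshTail_term_le u) (summable_coshTail u).hasSum ((Real.hasSum_cosh u).div_const 24)

lemma monotoneOn_coshTail : MonotoneOn coshTail (Ici 0) := fun a ha b _ hab =>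
  (summable_coshTail a).tsum_le_tsum (fun n => by gcongr) (summable_coshTail b)

lemma tendsto_coshTail_zero : Tendsto coshTail (𝓝 0) (𝓝 (1 / 24)) := by
  have hcosh : Tendsto (fun u => cosh u / 24) (𝓝 0) (𝓝 (1 / 24)) := by
    simpa using (continuous_cosh.div_const 24).tendsto 0
  exact tendsto_of_tendsto_of_tendsto_of_le_of_le tendsto_const_nhds hcosh
    one_div_24_le_coshTail coshTail_le

lemma psi_eq_inv_coshTail {τ : ℝ} (hτ : τ ≠ 0) : Psi τ = (8 * coshTail (2 * τ))⁻¹ := by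
  rw [Psi, coshTail_eq (mul_ne_zero two_ne_zero hτ), cosh_two_mul, cosh_sq,
    show sinh τ ^ 2 + 1 + sinh τ ^ 2 - 1 - (2 * τ) ^ 2 / 2 = 2 * (sinh τ ^ 2 - τ ^ 2) by ring]
  field_simp
  ring

theorem psi_antitone_limit_le_three :
    AntitoneOn Psi (Set.Ioi 0) ∧
    Tendsto Psi (nhdsWithin 0 (Set.Ioi 0)) (nhds 3) ∧
    ∀ τ : ℝ, 0 < τ → Psi τ ≤ 3 := by
  have hpos (u : ℝ) : 0 < 8 * coshTail u := by linarith [one_div_24_le_coshTail u]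
  refine ⟨fun a ha b hb hab => ?_, ?_, fun τ hτ => ?_⟩
  · rw [psi_eq_inv_coshTail ha.out.ne', psi_eq_inv_coshTail hb.out.ne']
    refine inv_anti₀ (hpos _) ?_
    gcongr
    exact monotoneOn_coshTail (mul_pos two_pos ha.out).le (mul_pos two_pos hb.out).le
      (by linarith)
  · have h2τ : Tendsto (fun τ : ℝ => 2 * τ) (𝓝[>] 0) (𝓝 0) := by
      simpa using ((continuous_const_mul (2 : ℝ)).tendsto 0).mono_left nhdsWithin_le_nhds
    have hlim := ((tendsto_coshTail_zero.comp h2τ).const_mul 8).inv₀ (by norm_num)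
    rw [show (8 * (1 / 24 : ℝ))⁻¹ = 3 by norm_num] at hlim
    refine hlim.congr' ?_
    filter_upwards [self_mem_nhdsWithin] with τ hτ
    exact (psi_eq_inv_coshTail (ne_of_gt hτ)).symm
  · rw [psi_eq_inv_coshTail hτ.ne']
    exact inv_le_of_inv_le₀ (by norm_num) (by linarith [one_div_24_le_coshTail (2 * τ)])
end

section
/- (Estimate for ‖φ_r‖ with free parameter) Suppose nonnegative reals P = ‖φ_r‖, S = ‖A_sym‖, A = ‖A‖, Q = ‖φ_θ‖ satisfy P² ≤ S² + 2AQ + 2Q² and Q² ≤ (2L²/π²)(S² + SP). Then for every sufficiently small ε ∈ (0,1), P ≤ √2((L²/ε² + 1)S + εA). Choosing ε = h^{1/4} and combining with ‖A‖² ≤ C₁(L)S(P/h + S) yields ‖A‖² ≤ C(L)h^{−3/2}S². -/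
/-!
With `k = K / ε²`, Young's inequality `2AQ ≤ ε²A² + Q²/ε²` and `ε ≤ 1` turn the two hypotheses into
`P² ≤ S² + ε²A² + 3k(S² + SP)`; absorbing the `SP` term into the left-hand side gives
`P² ≤ 2((L²/ε² + 1)S + εA)²` as soon as `3K ≤ L²`, which holds for `K = 2L²/π²`.
Taking `ε = h^{1/4}` and inserting the bound for `P` into `A² ≤ C₁S(P/h + S)`, the one remaining
`S·A` term is absorbed by Young's inequality again, leaving `A² h^{3/2} ≤ C S²`.
-/

open Real

lemma sq_le_two_mul_sq_of_sq_le_add {P S a k M : ℝ} (hS : 0 ≤ S) (ha : 0 ≤ a) (hk : 0 ≤ k)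
    (hkM : 3 * k ≤ M) (h : P ^ 2 ≤ S ^ 2 + a ^ 2 + 3 * k * (S ^ 2 + S * P)) :
    P ^ 2 ≤ 2 * ((M + 1) * S + a) ^ 2 := by
  have absorb : 3 * k * S * P ≤ P ^ 2 / 2 + 9 * k ^ 2 * S ^ 2 / 2 := by
    nlinarith [two_mul_le_add_sq (3 * k * S) P]
  have hM : 0 ≤ M := by linarith
  have hk₂ : (3 * k) ^ 2 * S ^ 2 ≤ M ^ 2 * S ^ 2 := by gcongr
  nlinarith [mul_le_mul_of_nonneg_right hkM (sq_nonneg S), mul_nonneg hM (sq_nonneg S),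
    mul_nonneg (mul_nonneg (by linarith : 0 ≤ M + 1) hS) ha]

lemma phi_r_sq_le_two_mul_sq {K L S A P Q ε : ℝ} (hK : 0 ≤ K) (hKL : 3 * K ≤ L ^ 2)
    (hS : 0 ≤ S) (hA : 0 ≤ A) (hε : 0 < ε) (hε₁ : ε ≤ 1)
    (h₁ : P ^ 2 ≤ S ^ 2 + 2 * A * Q + 2 * Q ^ 2) (h₂ : Q ^ 2 ≤ K * (S ^ 2 + S * P)) :
    P ^ 2 ≤ 2 * ((L ^ 2 / ε ^ 2 + 1) * S + ε * A) ^ 2 := by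
  have hε₂ : 0 < ε ^ 2 := by positivity
  have young : 2 * A * Q ≤ (ε * A) ^ 2 + Q ^ 2 / ε ^ 2 := by
    calc 2 * A * Q = 2 * (ε * A) * (Q / ε) := by field_simp
      _ ≤ (ε * A) ^ 2 + Q ^ 2 / ε ^ 2 := by rw [← div_pow]; exact two_mul_le_add_sq _ _
  have hQ : Q ^ 2 / ε ^ 2 ≤ K / ε ^ 2 * (S ^ 2 + S * P) := by
    rw [div_mul_eq_mul_div]; exact div_le_div_of_nonneg_right h₂ hε₂.le
  have hQε : Q ^ 2 ≤ Q ^ 2 / ε ^ 2 :=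
    le_div_self (sq_nonneg Q) hε₂ (pow_le_one₀ hε.le hε₁)
  refine sq_le_two_mul_sq_of_sq_le_add hS (by positivity) (div_nonneg hK hε₂.le)
    (by rw [mul_div_assoc']; exact div_le_div_of_nonneg_right hKL hε₂.le) ?_
  linarith

lemma three_mul_two_mul_sq_div_pi_sq_le (L : ℝ) : 3 * (2 * L ^ 2 / π ^ 2) ≤ L ^ 2 := by
  rw [mul_div_assoc', div_le_iff₀ (by positivity)]
  have hπ : 9 < π ^ 2 := by nlinarith [pi_gt_three]
  nlinarith [mul_le_mul_of_nonneg_left hπ.le (sq_nonneg L)]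

lemma le_sqrt_two_mul_of_sq_le {P X : ℝ} (hX : 0 ≤ X) (h : P ^ 2 ≤ 2 * X ^ 2) : P ≤ √2 * X := by
  refine (le_abs_self P).trans (abs_le_of_sq_le_sq ?_ (by positivity))
  rwa [mul_pow, sq_sqrt zero_le_two]

lemma sq_mul_pow_six_le_of_phi_r_le {C₁ L t P S A : ℝ} (hC₁ : 0 ≤ C₁) (hS : 0 ≤ S) (ht : 0 < t)
    (ht₁ : t ≤ 1) (hP : P ≤ √2 * ((L ^ 2 / t ^ 2 + 1) * S + t * A))
    (hA : A ^ 2 ≤ C₁ * S * (P / t ^ 4 + S)) :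
    A ^ 2 * t ^ 6 ≤ (2 * √2 * C₁ * (L ^ 2 + 1) + 2 * C₁ ^ 2 + 2 * C₁) * S ^ 2 := by
  have hPt : P * t ^ 2 ≤ √2 * ((L ^ 2 + t ^ 2) * S + t ^ 3 * A) := by
    calc P * t ^ 2 ≤ √2 * ((L ^ 2 / t ^ 2 + 1) * S + t * A) * t ^ 2 := by gcongr
      _ = _ := by field_simp
  have hAt : A ^ 2 * t ^ 4 ≤ C₁ * S * P + C₁ * S ^ 2 * t ^ 4 := by
    calc A ^ 2 * t ^ 4 ≤ C₁ * S * (P / t ^ 4 + S) * t ^ 4 := by gcongr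
      _ = _ := by field_simp
  have young : √2 * C₁ * S * (t ^ 3 * A) ≤ C₁ ^ 2 * S ^ 2 + (t ^ 3 * A) ^ 2 / 2 := by
    have hsq : (√2 * C₁ * S) ^ 2 = 2 * (C₁ * S) ^ 2 := by
      rw [mul_assoc, mul_pow, sq_sqrt zero_le_two]
    nlinarith [sq_nonneg (√2 * C₁ * S - t ^ 3 * A)]
  have ht₂ : t ^ 2 ≤ 1 := pow_le_one₀ ht.le ht₁
  have ht₆ : t ^ 6 ≤ 1 := pow_le_one₀ ht.le ht₁
  nlinarith [mul_le_mul_of_nonneg_left hPt (mul_nonneg hC₁ hS),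
    mul_le_mul_of_nonneg_right hAt (sq_nonneg t),
    mul_nonneg (mul_nonneg (mul_nonneg hC₁ (sqrt_nonneg 2)) (sq_nonneg S)) (sub_nonneg.2 ht₂),
    mul_nonneg (mul_nonneg hC₁ (sq_nonneg S)) (sub_nonneg.2 ht₆)]

lemma rpow_one_fourth_pow {h : ℝ} (hh : 0 ≤ h) (n : ℕ) :
    (h ^ (1 / 4 : ℝ)) ^ n = h ^ (n / 4 : ℝ) := by
  rw [← rpow_natCast, ← rpow_mul hh]
  ring_nf

/-- Estimate for ‖φ_r‖ with a free parameter ε, and the final optimization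
(ε = h^{1/4}) yielding the Korn inequality for A. -/
theorem phir_estimate_and_optimization :
    ∀ L C₁ : ℝ, 0 < L → 0 < C₁ → ∃ C : ℝ, 0 < C ∧
      ∀ h P S A Q : ℝ, 0 < h → h < 1 →
        0 ≤ P → 0 ≤ S → 0 ≤ A → 0 ≤ Q →
        P^2 ≤ S^2 + 2*A*Q + 2*Q^2 →
        Q^2 ≤ (2*L^2/π^2) * (S^2 + S*P) →
        (∃ ε₀ : ℝ, 0 < ε₀ ∧ ε₀ ≤ 1 ∧ ∀ ε : ℝ, 0 < ε → ε ≤ ε₀ →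
          P ≤ Real.sqrt 2 * ((L^2/ε^2 + 1)*S + ε*A)) ∧
        (A^2 ≤ C₁ * S * (P/h + S) → A^2 ≤ C * h ^ (-(3:ℝ)/2) * S^2) := by
  intro L C₁ _ hC₁
  refine ⟨2 * √2 * C₁ * (L ^ 2 + 1) + 2 * C₁ ^ 2 + 2 * C₁, by positivity, ?_⟩
  intro h P S A Q hh hh₁ _ hS hA _ h₁ h₂
  have hP : ∀ ε, 0 < ε → ε ≤ 1 → P ≤ √2 * ((L ^ 2 / ε ^ 2 + 1) * S + ε * A) := fun ε hε hε₁ =>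
    le_sqrt_two_mul_of_sq_le (by positivity)
      (phi_r_sq_le_two_mul_sq (by positivity) (three_mul_two_mul_sq_div_pi_sq_le L)
        hS hA hε hε₁ h₁ h₂)
  refine ⟨⟨1, one_pos, le_rfl, hP⟩, fun hA₂ => ?_⟩
  set t := h ^ (1 / 4 : ℝ)
  have ht : 0 < t := rpow_pos_of_pos hh _
  have ht₁ : t ≤ 1 := rpow_le_one hh.le hh₁.le (by norm_num)
  have ht₄ : t ^ 4 = h := by rw [rpow_one_fourth_pow hh.le]; norm_num
  have hh₃₂ : h ^ (-(3 : ℝ) / 2) = (t ^ 6)⁻¹ := by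
    rw [rpow_one_fourth_pow hh.le, ← rpow_neg hh.le]; norm_num
  rw [← ht₄] at hA₂
  rw [hh₃₂]
  calc A ^ 2 = A ^ 2 * t ^ 6 * (t ^ 6)⁻¹ := by field_simp
    _ ≤ (2 * √2 * C₁ * (L ^ 2 + 1) + 2 * C₁ ^ 2 + 2 * C₁) * S ^ 2 * (t ^ 6)⁻¹ :=
      mul_le_mul_of_nonneg_right
        (sq_mul_pow_six_le_of_phi_r_le hC₁.le hS ht ht₁ (hP t ht ht₁) hA₂) (by positivity)
    _ = _ := by ring
end
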